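/- A (K_n, P₃)-design exists if and only if n ≡ 0 or 1 (mod 4). -/

import Mathlib

open SimpleGraph

/-- The complete graph on the set `s` of natural numbers, viewed as a graph on `ℕ`. -/
def Kon (s : Set ℕ) : SimpleGraph ℕ where
  Adj x y := x ≠ y ∧ x ∈ s ∧ y ∈ s
  symm := ⟨fun x y ⟨h, hx, hy⟩ => ⟨h.symm, hy, hx⟩⟩
  loopless := ⟨fun x h => h.1 rfl⟩

/-- `B` is a copy of `Γ`: there is an injection of vertices under which the
edges of `B` are exactly the images of the edges of `Γ`. -/
def IsCopy {α β : Type*} (Γ : SimpleGraph α) (B : SimpleGraph β) : Prop :=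
  ∃ φ : α ↪ β, ∀ x y : β, B.Adj x y ↔ ∃ a b, Γ.Adj a b ∧ φ a = x ∧ φ b = y

/-- A `(G, Γ)`-design: a set of copies of `Γ`, each a subgraph of `G` with
nonempty edge set, whose edge sets partition the edge set of `G`. -/
def IsDesign {α β : Type*} (G : SimpleGraph β) (Γ : SimpleGraph α)
    (D : Set (SimpleGraph β)) : Prop :=
  (∀ B ∈ D, B ≤ G ∧ IsCopy Γ B ∧ B.edgeSet.Nonempty) ∧
  ∀ e ∈ G.edgeSet, ∃! B, B ∈ D ∧ e ∈ B.edgeSet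

/-- A down-link from the design `D` to the design `D'`: each block is mapped
to a subgraph of itself. -/
def IsDownlink {β : Type*} (D D' : Set (SimpleGraph β))
    (f : SimpleGraph β → SimpleGraph β) : Prop :=
  ∀ B ∈ D, f B ∈ D' ∧ f B ≤ B

/-!
Every path has two edges, so a design of `K_n` needs `2 ∣ n.choose 2`, i.e. `n ≡ 0, 1 (mod 4)`.
Conversely `K_0` and `K_1` have no edges, and a design of `K_n` extends to `K_{n+4}`: the new
vertices `n, …, n+3` span a `K_4`, which is the union of the paths `n+1, n, n+2`,
`n+3, n+1, n+2` and `n+2, n+3, n`, and each old vertex `v` contributes the paths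
`n, v, n+1` and `n+2, v, n+3` covering its edges to the new vertices.
-/

open Function

variable {α β : Type*} {Γ : SimpleGraph α}

lemma IsCopy.ncard_edgeSet {B : SimpleGraph β} (h : IsCopy Γ B) :
    B.edgeSet.ncard = Γ.edgeSet.ncard := by
  obtain ⟨φ, hφ⟩ := h
  obtain rfl : B = Γ.map φ := by ext x y; rw [map_adj]; exact hφ x y
  rw [edgeSet_map, Set.ncard_image_of_injective _ φ.sym2Map.injective]

lemma IsDesign.ncard_edgeSet_dvd {G : SimpleGraph β} {D : Set (SimpleGraph β)}
    (hD : IsDesign G Γ D) (hG : G.edgeSet.Finite) : Γ.edgeSet.ncard ∣ G.edgeSet.ncard := by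
  classical
  obtain ⟨hblocks, hunique⟩ := hD
  choose! block hblock hblock_unique using hunique
  have fiber : ∀ B ∈ D, {e ∈ hG.toFinset | block e = B} = B.edgeSet := by
    intro B hB
    ext e
    simp only [Finset.coe_filter, Set.Finite.mem_toFinset, Set.mem_ofPred_eq]
    constructor
    · rintro ⟨he, rfl⟩
      exact (hblock e he).2
    · intro he
      have heG := edgeSet_mono (hblocks B hB).1 he
      exact ⟨heG, (hblock_unique e heG B ⟨hB, he⟩).symm⟩
  rw [Set.ncard_eq_toFinset_card _ hG, Finset.card_eq_sum_card_image block]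
  refine Finset.dvd_sum fun B hB => ?_
  obtain ⟨e, he, rfl⟩ := Finset.mem_image.1 hB
  have hD := (hblock e (hG.mem_toFinset.1 he)).1
  rw [← Set.ncard_coe_finset, fiber _ hD, (hblocks _ hD).2.1.ncard_edgeSet]

lemma isDesign_bot : IsDesign (⊥ : SimpleGraph β) Γ ∅ :=
  ⟨fun _ h => h.elim, fun _ he => by simp at he⟩

lemma isDesign_singleton {B : SimpleGraph β} (hB : IsCopy Γ B) (hne : B.edgeSet.Nonempty) :
    IsDesign B Γ {B} :=
  ⟨by rintro _ rfl; exact ⟨le_rfl, hB, hne⟩, fun _ he => ⟨B, ⟨rfl, he⟩, fun _ h => h.1⟩⟩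

lemma IsDesign.iUnion {ι : Type*} {G : ι → SimpleGraph β} {D : ι → Set (SimpleGraph β)}
    (hD : ∀ i, IsDesign (G i) Γ (D i)) (hG : Pairwise (Disjoint on G)) :
    IsDesign (⨆ i, G i) Γ (⋃ i, D i) := by
  refine ⟨fun B hB => ?_, fun e he => ?_⟩
  · obtain ⟨i, hB⟩ := Set.mem_iUnion.1 hB
    obtain ⟨hle, hcopy, hne⟩ := (hD i).1 B hB
    exact ⟨hle.trans (le_iSup G i), hcopy, hne⟩
  · obtain ⟨i, he⟩ := Set.mem_iUnion.1 (edgeSet_iSup ▸ he)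
    obtain ⟨B, ⟨hB, heB⟩, huniq⟩ := (hD i).2 e he
    refine ⟨B, ⟨Set.mem_iUnion.2 ⟨i, hB⟩, heB⟩, fun B' ⟨hB', heB'⟩ => ?_⟩
    obtain ⟨j, hB'⟩ := Set.mem_iUnion.1 hB'
    obtain rfl | hij := eq_or_ne i j
    · exact huniq B' ⟨hB', heB'⟩
    · have he' := edgeSet_mono ((hD j).1 B' hB').1 heB'
      exact absurd he' (Set.disjoint_left.1 (disjoint_edgeSet.2 (hG hij)) he)

lemma IsDesign.union {G G' : SimpleGraph β} {D D' : Set (SimpleGraph β)}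
    (hD : IsDesign G Γ D) (hD' : IsDesign G' Γ D') (h : Disjoint G G') :
    IsDesign (G ⊔ G') Γ (D ∪ D') := by
  rw [sup_eq_iSup, Set.union_eq_iUnion]
  exact IsDesign.iUnion (Bool.forall_bool.2 ⟨hD', hD⟩) (pairwise_disjoint_on_bool.2 h)

def path3 (a b c : β) : SimpleGraph β := fromEdgeSet {s(a, b), s(b, c)}

lemma path3_adj {a b c x y : β} :
    (path3 a b c).Adj x y ↔
      (x = a ∧ y = b ∨ x = b ∧ y = a ∨ x = b ∧ y = c ∨ x = c ∧ y = b) ∧ x ≠ y := by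
  simp [path3, or_assoc]

lemma disjoint_path3_left {a b c : β} {G : SimpleGraph β} :
    Disjoint (path3 a b c) G ↔ ¬G.Adj a b ∧ ¬G.Adj b c := by
  rw [path3, fromEdgeSet_disjoint, Set.disjoint_insert_left, Set.disjoint_singleton_left,
    mem_edgeSet, mem_edgeSet]

lemma disjoint_path3_right {a b c : β} {G : SimpleGraph β} :
    Disjoint G (path3 a b c) ↔ ¬G.Adj a b ∧ ¬G.Adj b c :=
  disjoint_comm.trans disjoint_path3_left

lemma isCopy_path3 {a b c : β} (hab : a ≠ b) (hbc : b ≠ c) (hac : a ≠ c) :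
    IsCopy (pathGraph 3) (path3 a b c) := by
  refine ⟨⟨![a, b, c], fun i j h => ?_⟩, fun x y => ?_⟩
  · fin_cases i <;> fin_cases j <;> simp_all [eq_comm]
  · aesop (add simp [path3_adj, pathGraph_adj, Fin.exists_fin_succ])

lemma isDesign_path3 {a b c : β} (hab : a ≠ b) (hbc : b ≠ c) (hac : a ≠ c) :
    IsDesign (path3 a b c) (pathGraph 3) {path3 a b c} :=
  isDesign_singleton (isCopy_path3 hab hbc hac) ⟨s(a, b), path3_adj.2 ⟨Or.inl ⟨rfl, rfl⟩, hab⟩⟩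

lemma ncard_edgeSet_pathGraph_three : (pathGraph 3).edgeSet.ncard = 2 := by
  rw [← (isCopy_path3 (a := 0) (b := 1) (c := 2) (by decide) (by decide) (by decide)).ncard_edgeSet,
    path3, edgeSet_fromEdgeSet, sdiff_eq_left.2, Set.ncard_pair (by simp)]
  simp

lemma kon_eq_map_top (s : Set ℕ) : Kon s = (⊤ : SimpleGraph s).map (Embedding.subtype _) := by
  ext x y
  simp only [Kon, map_adj, top_adj, Embedding.subtype_apply]
  constructor
  · rintro ⟨hxy, hx, hy⟩
    exact ⟨⟨x, hx⟩, ⟨y, hy⟩, fun h => hxy (congrArg Subtype.val h), rfl, rfl⟩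
  · rintro ⟨x, y, hxy, rfl, rfl⟩
    exact ⟨Subtype.val_injective.ne hxy, x.2, y.2⟩

lemma finite_edgeSet_kon {s : Set ℕ} (hs : s.Finite) : (Kon s).edgeSet.Finite := by
  have := hs.to_subtype
  rw [kon_eq_map_top, edgeSet_map]
  exact (Set.toFinite _).image _

lemma ncard_edgeSet_kon {s : Set ℕ} (hs : s.Finite) :
    (Kon s).edgeSet.ncard = s.ncard.choose 2 := by
  classical
  have := hs.fintype
  rw [kon_eq_map_top, edgeSet_map, Set.ncard_image_of_injective _ (Embedding.sym2Map _).injective,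
    Set.ncard_eq_toFinset_card', ← edgeFinset, card_edgeFinset_top_eq_card_choose_two,
    Set.ncard_eq_toFinset_card' s, Set.toFinset_card]

lemma two_dvd_choose_two_iff (n : ℕ) : 2 ∣ n.choose 2 ↔ n % 4 = 0 ∨ n % 4 = 1 := by
  have hc : n * (n - 1) = 2 * n.choose 2 := by
    rw [Nat.choose_two_right, Nat.mul_div_cancel' (Nat.even_mul_pred_self n).two_dvd]
  have h4 : 2 ∣ n.choose 2 ↔ 4 ∣ n * (n - 1) := by
    rw [hc]
    exact (Nat.mul_dvd_mul_iff_left two_pos).symm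
  rw [h4, Nat.dvd_iff_mod_eq_zero, Nat.mul_mod]
  rcases n with _ | m
  · simp
  · have : m % 4 < 4 := Nat.mod_lt _ (by norm_num)
    rw [Nat.add_sub_cancel, Nat.add_mod]
    interval_cases m % 4 <;> simp

lemma mod_four_eq_zero_or_one_of_isDesign_kon_Iio {n : ℕ} {D : Set (SimpleGraph ℕ)}
    (hD : IsDesign (Kon (Set.Iio n)) (pathGraph 3) D) : n % 4 = 0 ∨ n % 4 = 1 := by
  have h := hD.ncard_edgeSet_dvd (finite_edgeSet_kon (Set.finite_Iio n))
  rwa [ncard_edgeSet_pathGraph_three, ncard_edgeSet_kon (Set.finite_Iio n), Set.ncard_Iio_nat,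
    two_dvd_choose_two_iff] at h

lemma kon_Ico_eq (n : ℕ) : Kon (Set.Ico n (n + 4)) =
    path3 (n + 1) n (n + 2) ⊔ (path3 (n + 3) (n + 1) (n + 2) ⊔ path3 (n + 2) (n + 3) n) := by
  ext x y
  simp only [Kon, sup_adj, path3_adj, Set.mem_Ico]
  constructor
  · rintro ⟨hxy, ⟨hx, hx4⟩, hy, hy4⟩
    obtain ⟨i, rfl⟩ := Nat.exists_eq_add_of_le hx
    obtain ⟨j, rfl⟩ := Nat.exists_eq_add_of_le hy
    have hi : i < 4 := by omega
    have hj : j < 4 := by omega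
    interval_cases i <;> interval_cases j <;> simp_all
  · rintro (⟨h | h | h | h, hne⟩ | ⟨h | h | h | h, hne⟩ | ⟨h | h | h | h, hne⟩) <;> omega

lemma isDesign_kon_Ico (n : ℕ) :
    IsDesign (Kon (Set.Ico n (n + 4))) (pathGraph 3)
      {path3 (n + 1) n (n + 2), path3 (n + 3) (n + 1) (n + 2), path3 (n + 2) (n + 3) n} := by
  have h₁ : Disjoint (path3 (n + 3) (n + 1) (n + 2)) (path3 (n + 2) (n + 3) n) := by
    simp [disjoint_path3_left, path3_adj]
  have h₂ : Disjoint (path3 (n + 1) n (n + 2))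
      (path3 (n + 3) (n + 1) (n + 2) ⊔ path3 (n + 2) (n + 3) n) := by
    simp [disjoint_path3_left, path3_adj]
  rw [kon_Ico_eq, ← Set.singleton_union, ← Set.singleton_union]
  exact (isDesign_path3 (by omega) (by omega) (by omega)).union
    ((isDesign_path3 (by omega) (by omega) (by omega)).union
      (isDesign_path3 (by omega) (by omega) (by omega)) h₁) h₂

lemma kon_Iio_add_four_eq (n : ℕ) : Kon (Set.Iio (n + 4)) = Kon (Set.Iio n) ⊔
    (⨆ v : Set.Iio n, path3 n v (n + 1) ⊔ path3 (n + 2) v (n + 3)) ⊔ Kon (Set.Ico n (n + 4)) := by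
  ext x y
  simp only [Kon, sup_adj, iSup_adj, path3_adj, Set.mem_Ico, Set.mem_Iio, Subtype.exists,
    exists_prop]
  constructor
  · rintro ⟨hxy, hx, hy⟩
    by_cases hxn : x < n <;> by_cases hyn : y < n
    · exact Or.inl (Or.inl ⟨hxy, hxn, hyn⟩)
    · exact Or.inl (Or.inr ⟨x, hxn, by omega⟩)
    · exact Or.inl (Or.inr ⟨y, hyn, by omega⟩)
    · exact Or.inr ⟨hxy, ⟨by omega, hx⟩, by omega, hy⟩
  · rintro ((⟨hxy, hx, hy⟩ | ⟨v, hv, ⟨h | h | h | h, hne⟩ | ⟨h | h | h | h, hne⟩⟩) |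
      ⟨hxy, ⟨-, hx⟩, -, hy⟩) <;> omega

lemma exists_isDesign_kon_Iio_add_four {n : ℕ} {D : Set (SimpleGraph ℕ)}
    (hD : IsDesign (Kon (Set.Iio n)) (pathGraph 3) D) :
    ∃ D', IsDesign (Kon (Set.Iio (n + 4))) (pathGraph 3) D' := by
  set star : Set.Iio n → SimpleGraph ℕ := fun v => path3 n v (n + 1) ⊔ path3 (n + 2) v (n + 3)
  have hstar : ∀ v : Set.Iio n, IsDesign (star v) (pathGraph 3)
      {path3 n v (n + 1), path3 (n + 2) v (n + 3)} := by
    intro v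
    have hv : (v : ℕ) < n := v.2
    rw [← Set.singleton_union]
    refine (isDesign_path3 (by omega) (by omega) (by omega)).union
      (isDesign_path3 (by omega) (by omega) (by omega)) ?_
    simp only [disjoint_path3_left, path3_adj]
    omega
  have hstar_disj : Pairwise (Disjoint on star) := by
    intro v w hvw
    have hvw' : (v : ℕ) ≠ w := Subtype.val_injective.ne hvw
    have hv : (v : ℕ) < n := v.2
    have hw : (w : ℕ) < n := w.2
    simp only [star, onFun, disjoint_sup_left, disjoint_sup_right, disjoint_path3_left,
      path3_adj]
    omega
  have hK_star : Disjoint (Kon (Set.Iio n)) (⨆ v, star v) := by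
    rw [disjoint_iSup_iff]
    rintro ⟨v, hv : v < n⟩
    simp only [star, disjoint_sup_right, disjoint_path3_right, Kon, Set.mem_Iio]
    omega
  have hK_Ico : Disjoint (Kon (Set.Iio n) ⊔ ⨆ v, star v) (Kon (Set.Ico n (n + 4))) := by
    rw [disjoint_sup_left, iSup_disjoint_iff]
    refine ⟨?_, ?_⟩
    · rw [disjoint_left]
      rintro x y ⟨-, hx : x < n, -⟩ ⟨-, ⟨hx' : n ≤ x, -⟩, -⟩
      omega
    · rintro ⟨v, hv : v < n⟩
      simp only [star, disjoint_sup_left, disjoint_path3_left, Kon, Set.mem_Ico]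
      omega
  rw [kon_Iio_add_four_eq]
  exact ⟨_, (hD.union (.iUnion hstar hstar_disj) hK_star).union (isDesign_kon_Ico n) hK_Ico⟩

lemma exists_isDesign_kon_Iio {n : ℕ} (hn : n % 4 = 0 ∨ n % 4 = 1) :
    ∃ D, IsDesign (Kon (Set.Iio n)) (pathGraph 3) D := by
  induction n using Nat.strong_induction_on with
  | _ n ih =>
    by_cases h4 : n < 4
    · have hK : Kon (Set.Iio n) = ⊥ := by
        ext x y
        simp only [Kon, Set.mem_Iio, bot_adj, iff_false]
        omega
      exact ⟨∅, hK ▸ isDesign_bot⟩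
    · obtain ⟨m, rfl⟩ : ∃ m, n = m + 4 := ⟨n - 4, by omega⟩
      obtain ⟨D, hD⟩ := ih m (by omega) (by omega)
      exact exists_isDesign_kon_Iio_add_four hD

theorem stmt2_general (n : ℕ) :
    (∃ D : Set (SimpleGraph ℕ), IsDesign (Kon (Set.Iio n)) (pathGraph 3) D) ↔
      n % 4 = 0 ∨ n % 4 = 1 :=
  ⟨fun ⟨_, hD⟩ => mod_four_eq_zero_or_one_of_isDesign_kon_Iio hD, exists_isDesign_kon_Iio⟩

/-- A `(K_n, P₃)`-design exists iff `n ≡ 0, 1 (mod 4)`. -/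
theorem stmt2 (n : ℕ) (hn : 3 ≤ n) :
    (∃ D : Set (SimpleGraph ℕ), IsDesign (Kon (Set.Iio n)) (pathGraph 3) D) ↔
      n % 4 = 0 ∨ n % 4 = 1 :=
  stmt2_general n
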